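/- Let (Ω, F, P) be a probability space, let F_0, …, F_{N−1} ∈ ℝ^{m×n} be deterministic matrices, let X_0, …, X_{N−1} : Ω → ℝ^{n×n} be measurable random matrices and y_0, …, y_{N−1} : Ω → ℝ^n measurable random vectors with E‖X_k‖² < ∞ and E‖y_k‖² < ∞ for all k. Assume: (i) E[X_k] = 0 (entrywise) for every k; (ii) X_k is independent of y_l whenever k ≥ l; and (iii) for every k < l, the random matrix X_l is independent of the triple (X_k, y_k, y_l). Then E‖ Σ_{k=0}^{N−1} F_k X_k y_k ‖² ≤ Σ_{k=0}^{N−1} ‖F_k‖² · E‖X_k‖² · E‖y_k‖². -/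

import Mathlib

open MeasureTheory ProbabilityTheory Matrix

/-- Entrywise measurable-space structure on random matrices. -/
instance matrixMeasurableSpace {m n : ℕ} : MeasurableSpace (Matrix (Fin m) (Fin n) ℝ) :=
  MeasurableSpace.pi

/-- The Euclidean (ℓ²) norm on `ℝⁿ`. -/
noncomputable def euclNorm {n : ℕ} (v : Fin n → ℝ) : ℝ := Real.sqrt (∑ i, v i ^ 2)

/-- The spectral norm of a real matrix: the operator norm induced by the Euclidean norms. -/
noncomputable def specNorm {m n : ℕ} (A : Matrix (Fin m) (Fin n) ℝ) : ℝ :=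
  ‖LinearMap.toContinuousLinearMap (Matrix.toEuclideanLin A)‖

lemma euclNorm_eq {n : ℕ} (v : Fin n → ℝ) :
    euclNorm v = ‖(WithLp.equiv 2 (Fin n → ℝ)).symm v‖ := by
  rw [EuclideanSpace.norm_eq]
  simp [euclNorm, sq_abs]

lemma euclNorm_nonneg {n : ℕ} (v : Fin n → ℝ) : 0 ≤ euclNorm v := Real.sqrt_nonneg _

lemma euclNorm_mulVec_le {m n : ℕ} (A : Matrix (Fin m) (Fin n) ℝ) (v : Fin n → ℝ) :
    euclNorm (A.mulVec v) ≤ specNorm A * euclNorm v := by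
  rw [euclNorm_eq, euclNorm_eq]
  have h := (LinearMap.toContinuousLinearMap (Matrix.toEuclideanLin A)).le_opNorm
    ((WithLp.equiv 2 (Fin n → ℝ)).symm v)
  simpa [Matrix.toEuclideanLin_apply, specNorm] using h

lemma norm_toCLM {m n : ℕ} (A : Matrix (Fin m) (Fin n) ℝ) (x : EuclideanSpace ℝ (Fin n)) :
    ‖LinearMap.toContinuousLinearMap (Matrix.toEuclideanLin A) x‖
      = euclNorm (A.mulVec (WithLp.equiv 2 (Fin n → ℝ) x)) := by
  rw [euclNorm_eq]
  congr 1

lemma norm_eucl {n : ℕ} (x : EuclideanSpace ℝ (Fin n)) :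
    ‖x‖ = euclNorm (WithLp.equiv 2 (Fin n → ℝ) x) := by
  rw [euclNorm_eq]; congr 1

lemma specNorm_mul_le {m n p : ℕ} (A : Matrix (Fin m) (Fin n) ℝ) (B : Matrix (Fin n) (Fin p) ℝ) :
    specNorm (A * B) ≤ specNorm A * specNorm B := by
  apply ContinuousLinearMap.opNorm_le_bound _
    (mul_nonneg (norm_nonneg _) (norm_nonneg _))
  intro x
  rw [norm_toCLM, norm_eucl, ← Matrix.mulVec_mulVec]
  calc euclNorm (A.mulVec (B.mulVec (WithLp.equiv 2 (Fin p → ℝ) x)))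
      ≤ specNorm A * euclNorm (B.mulVec (WithLp.equiv 2 (Fin p → ℝ) x)) := euclNorm_mulVec_le _ _
    _ ≤ specNorm A * (specNorm B * euclNorm (WithLp.equiv 2 (Fin p → ℝ) x)) := by
        exact mul_le_mul_of_nonneg_left (euclNorm_mulVec_le _ _) (norm_nonneg _)
    _ = specNorm A * specNorm B * euclNorm (WithLp.equiv 2 (Fin p → ℝ) x) := (mul_assoc _ _ _).symm

lemma abs_le_euclNorm {n : ℕ} (v : Fin n → ℝ) (i : Fin n) : |v i| ≤ euclNorm v := by
  rw [euclNorm]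
  rw [← Real.sqrt_sq_eq_abs]
  apply Real.sqrt_le_sqrt
  exact Finset.single_le_sum (f := fun j => v j ^ 2) (fun j _ => sq_nonneg _) (Finset.mem_univ i)

lemma euclNorm_single {n : ℕ} (j : Fin n) : euclNorm (Pi.single j (1:ℝ)) = 1 := by
  rw [euclNorm]
  rw [Finset.sum_eq_single j]
  · simp
  · intro b _ hb; simp [Pi.single_apply, hb]
  · simp

lemma abs_entry_le_specNorm {m n : ℕ} (A : Matrix (Fin m) (Fin n) ℝ) (i : Fin m) (j : Fin n) :
    |A i j| ≤ specNorm A := by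
  have h1 : A.mulVec (Pi.single j 1) i = A i j := by
    simp [Matrix.mulVec_single]
  calc |A i j| = |A.mulVec (Pi.single j 1) i| := by rw [h1]
    _ ≤ euclNorm (A.mulVec (Pi.single j 1)) := abs_le_euclNorm _ _
    _ ≤ specNorm A * euclNorm (Pi.single j 1) := euclNorm_mulVec_le _ _
    _ = specNorm A := by rw [euclNorm_single, mul_one]

instance matrixBorel {m n : ℕ} : BorelSpace (Matrix (Fin m) (Fin n) ℝ) := Pi.borelSpace

lemma measurable_specNorm {m n : ℕ} :
    Measurable (fun A : Matrix (Fin m) (Fin n) ℝ => specNorm A) := by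
  have hc : Continuous (fun A : Matrix (Fin m) (Fin n) ℝ =>
      (LinearMap.toContinuousLinearMap (Matrix.toEuclideanLin A))) := by
    have : IsLinearMap ℝ (fun A : Matrix (Fin m) (Fin n) ℝ =>
        LinearMap.toContinuousLinearMap (Matrix.toEuclideanLin A)) := by
      constructor <;> intros <;> simp
    exact (this.mk' _).continuous_of_finiteDimensional
  exact (hc.norm).measurable

lemma measurable_euclNorm {n : ℕ} : Measurable (fun v : Fin n → ℝ => euclNorm v) := by
  apply Measurable.comp Real.continuous_sqrt.measurable
  exact Finset.measurable_sum _ (fun i _ => ((measurable_pi_apply i).pow_const 2))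

lemma integrable_mul_of_memL2 {Ω : Type*} [MeasurableSpace Ω] {P : Measure Ω}
    {f g : Ω → ℝ} (hf : MemLp f 2 P) (hg : MemLp g 2 P) :
    Integrable (fun ω => f ω * g ω) P := by
  rw [← memLp_one_iff_integrable]
  have h := hg.smul (φ := f) hf (r := 1) (hpqr := ⟨by simp [one_div, ENNReal.inv_two_add_inv_two]⟩)
  simpa [smul_eq_mul, Pi.mul_def] using h

/-- If each `Xₖ` is zero-mean, `Xₖ` is independent of `yₗ` for `k ≥ l`, and
`Xₗ` is independent of the triple `(Xₖ, yₖ, yₗ)` for `k < l`, then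
`E‖Σₖ Fₖ Xₖ yₖ‖² ≤ Σₖ ‖Fₖ‖² ⬝ E‖Xₖ‖² ⬝ E‖yₖ‖²`. -/
theorem second_moment_sum_le_of_zero_mean
    {m n N : ℕ} {Ω : Type*} [MeasurableSpace Ω] (P : Measure Ω) [IsProbabilityMeasure P]
    (F : Fin N → Matrix (Fin m) (Fin n) ℝ)
    (X : Fin N → Ω → Matrix (Fin n) (Fin n) ℝ) (y : Fin N → Ω → Fin n → ℝ)
    (hXmeas : ∀ k, Measurable (X k)) (hymeas : ∀ k, Measurable (y k))
    (hX2 : ∀ k, Integrable (fun ω => specNorm (X k ω) ^ 2) P)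
    (hy2 : ∀ k, Integrable (fun ω => euclNorm (y k ω) ^ 2) P)
    (hmean : ∀ k i j, ∫ ω, X k ω i j ∂P = 0)
    (hindep₁ : ∀ k l : Fin N, l ≤ k → IndepFun (X k) (y l) P)
    (hindep₂ : ∀ k l : Fin N, k < l →
      IndepFun (X l) (fun ω => (X k ω, y k ω, y l ω)) P) :
    ∫ ω, euclNorm (∑ k, (F k * X k ω).mulVec (y k ω)) ^ 2 ∂P
      ≤ ∑ k, specNorm (F k) ^ 2 * (∫ ω, specNorm (X k ω) ^ 2 ∂P)
          * ∫ ω, euclNorm (y k ω) ^ 2 ∂P := by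
  classical
  set Z : Fin N → Ω → Fin m → ℝ := fun k ω => (F k * X k ω).mulVec (y k ω) with hZdef
  -- entry measurability
  have hXe : ∀ (k : Fin N) (r q : Fin n), Measurable (fun ω => X k ω r q) := fun k r q =>
    (measurable_pi_apply q).comp ((measurable_pi_apply r).comp (hXmeas k))
  have hye : ∀ (k : Fin N) (q : Fin n), Measurable (fun ω => y k ω q) := fun k q =>
    (measurable_pi_apply q).comp (hymeas k)
  have hZmeas : ∀ (k : Fin N) (i : Fin m), Measurable (fun ω => Z k ω i) := by
    intro k i
    have h : (fun ω => Z k ω i) = fun ω => ∑ p, (∑ q, F k i q * X k ω q p) * y k ω p := by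
      funext ω
      simp [hZdef, Matrix.mulVec, Matrix.mul_apply, dotProduct]
    rw [h]
    exact Finset.measurable_sum _ fun p _ =>
      ((Finset.measurable_sum _ fun q _ => (measurable_const.mul (hXe k q p))).mul (hye k p))
  -- pointwise bounds
  have hZbound : ∀ (k : Fin N) ω,
      euclNorm (Z k ω) ≤ specNorm (F k) * specNorm (X k ω) * euclNorm (y k ω) := by
    intro k ω
    calc euclNorm (Z k ω) ≤ specNorm (F k * X k ω) * euclNorm (y k ω) := euclNorm_mulVec_le _ _
      _ ≤ specNorm (F k) * specNorm (X k ω) * euclNorm (y k ω) :=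
        mul_le_mul_of_nonneg_right (specNorm_mul_le _ _) (euclNorm_nonneg _)
  have hZabs : ∀ (k : Fin N) ω (i : Fin m),
      |Z k ω i| ≤ specNorm (F k) * specNorm (X k ω) * euclNorm (y k ω) :=
    fun k ω i => (abs_le_euclNorm _ i).trans (hZbound k ω)
  -- integrability of the product of squared norms
  have hindNorm : ∀ k, IndepFun (fun ω => specNorm (X k ω) ^ 2)
      (fun ω => euclNorm (y k ω) ^ 2) P :=
    fun k => (hindep₁ k k le_rfl).comp (measurable_specNorm.pow_const 2)
      (measurable_euclNorm.pow_const 2)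
  have hprodInt : ∀ k,
      Integrable (fun ω => specNorm (X k ω) ^ 2 * euclNorm (y k ω) ^ 2) P := by
    intro k
    exact (hindNorm k).integrable_mul (hX2 k) (hy2 k)
  have hDomInt : ∀ k, Integrable
      (fun ω => specNorm (F k) ^ 2 * (specNorm (X k ω) ^ 2 * euclNorm (y k ω) ^ 2)) P :=
    fun k => (hprodInt k).const_mul _
  -- L² memberships
  have hZ2 : ∀ (k : Fin N) (i : Fin m), MemLp (fun ω => Z k ω i) 2 P := by
    intro k i
    rw [memLp_two_iff_integrable_sq ((hZmeas k i).aestronglyMeasurable)]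
    apply (hDomInt k).mono' ((hZmeas k i).pow_const 2).aestronglyMeasurable
    filter_upwards with ω
    calc ‖Z k ω i ^ 2‖ = |Z k ω i| ^ 2 := by rw [Real.norm_eq_abs, abs_pow]
      _ ≤ (specNorm (F k) * specNorm (X k ω) * euclNorm (y k ω)) ^ 2 :=
        pow_le_pow_left₀ (abs_nonneg _) (hZabs k ω i) 2
      _ = specNorm (F k) ^ 2 * (specNorm (X k ω) ^ 2 * euclNorm (y k ω) ^ 2) := by ring
  have hye2 : ∀ (k : Fin N) (q : Fin n), MemLp (fun ω => y k ω q) 2 P := by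
    intro k q
    rw [memLp_two_iff_integrable_sq (hye k q).aestronglyMeasurable]
    apply (hy2 k).mono' ((hye k q).pow_const 2).aestronglyMeasurable
    filter_upwards with ω
    calc ‖y k ω q ^ 2‖ = |y k ω q| ^ 2 := by rw [Real.norm_eq_abs, abs_pow]
      _ ≤ euclNorm (y k ω) ^ 2 := pow_le_pow_left₀ (abs_nonneg _) (abs_le_euclNorm _ _) 2
  have hXe2 : ∀ (k : Fin N) (r q : Fin n), MemLp (fun ω => X k ω r q) 2 P := by
    intro k r q
    rw [memLp_two_iff_integrable_sq (hXe k r q).aestronglyMeasurable]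
    apply (hX2 k).mono' ((hXe k r q).pow_const 2).aestronglyMeasurable
    filter_upwards with ω
    calc ‖X k ω r q ^ 2‖ = |X k ω r q| ^ 2 := by rw [Real.norm_eq_abs, abs_pow]
      _ ≤ specNorm (X k ω) ^ 2 :=
        pow_le_pow_left₀ (abs_nonneg _) (abs_entry_le_specNorm _ _ _) 2
  have hZZint : ∀ (k l : Fin N) (i : Fin m), Integrable (fun ω => Z k ω i * Z l ω i) P :=
    fun k l i => integrable_mul_of_memL2 (hZ2 k i) (hZ2 l i)
  -- cross terms vanish
  have hcross_lt : ∀ (i : Fin m) (k l : Fin N), k < l → ∫ ω, Z k ω i * Z l ω i ∂P = 0 := by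
    intro i k l hkl
    have hexp : ∀ ω, Z k ω i * Z l ω i
        = ∑ p, ∑ q, X l ω q p * (F l i q * (Z k ω i * y l ω p)) := by
      intro ω
      have h : Z l ω i = ∑ p, ∑ q, F l i q * X l ω q p * y l ω p := by
        simp [hZdef, Matrix.mulVec, Matrix.mul_apply, dotProduct, Finset.sum_mul]
      rw [h, Finset.mul_sum]
      refine Finset.sum_congr rfl fun p _ => ?_
      rw [Finset.mul_sum]
      exact Finset.sum_congr rfl fun q _ => by ring
    have hterm_ind : ∀ (p q : Fin n),
        IndepFun (fun ω => X l ω q p) (fun ω => F l i q * (Z k ω i * y l ω p)) P := by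
      intro p q
      have hφ : Measurable (fun A : Matrix (Fin n) (Fin n) ℝ => A q p) :=
        (measurable_pi_apply p).comp (measurable_pi_apply q)
      have hψ : Measurable (fun t : Matrix (Fin n) (Fin n) ℝ × ((Fin n → ℝ) × (Fin n → ℝ)) =>
          F l i q * (((F k * t.1).mulVec t.2.1) i * t.2.2 p)) := by
        apply Measurable.const_mul
        apply Measurable.mul
        · have h : (fun t : Matrix (Fin n) (Fin n) ℝ × ((Fin n → ℝ) × (Fin n → ℝ)) =>
              ((F k * t.1).mulVec t.2.1) i)
              = fun t => ∑ p', (∑ q', F k i q' * t.1 q' p') * t.2.1 p' := by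
            funext t; simp [Matrix.mulVec, Matrix.mul_apply, dotProduct]
          rw [h]
          exact Finset.measurable_sum _ fun p' _ =>
            ((Finset.measurable_sum _ fun q' _ => measurable_const.mul
              ((measurable_pi_apply p').comp
                ((measurable_pi_apply q').comp measurable_fst))).mul
              ((measurable_pi_apply p').comp (measurable_fst.comp measurable_snd)))
        · exact (measurable_pi_apply p).comp (measurable_snd.comp measurable_snd)
      exact (hindep₂ k l hkl).comp hφ hψ
    have hterm_int : ∀ (p q : Fin n),
        Integrable (fun ω => X l ω q p * (F l i q * (Z k ω i * y l ω p))) P := by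
      intro p q
      have h1 : Integrable (fun ω => Z k ω i * y l ω p) P :=
        integrable_mul_of_memL2 (hZ2 k i) (hye2 l p)
      exact (hterm_ind p q).integrable_mul ((hXe2 l q p).integrable one_le_two)
        (h1.const_mul _)
    calc ∫ ω, Z k ω i * Z l ω i ∂P
        = ∫ ω, ∑ p, ∑ q, X l ω q p * (F l i q * (Z k ω i * y l ω p)) ∂P :=
          integral_congr_ae (Filter.Eventually.of_forall hexp)
      _ = ∑ p, ∑ q, ∫ ω, X l ω q p * (F l i q * (Z k ω i * y l ω p)) ∂P := by
          rw [integral_finset_sum _ fun p _ =>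
            integrable_finset_sum _ fun q _ => hterm_int p q]
          exact Finset.sum_congr rfl fun p _ =>
            integral_finset_sum _ fun q _ => hterm_int p q
      _ = 0 := by
          apply Finset.sum_eq_zero; intro p _
          apply Finset.sum_eq_zero; intro q _
          rw [(hterm_ind p q).integral_fun_mul_eq_mul_integral (hXe l q p).aestronglyMeasurable
            ((measurable_const.mul ((hZmeas k i).mul (hye l p))).aestronglyMeasurable)]
          rw [hmean l q p, zero_mul]
  have hcross : ∀ (i : Fin m) (k l : Fin N), k ≠ l → ∫ ω, Z k ω i * Z l ω i ∂P = 0 := by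
    intro i k l hne
    rcases lt_or_gt_of_ne hne with h | h
    · exact hcross_lt i k l h
    · have h0 := hcross_lt i l k h
      rw [← h0]
      exact integral_congr_ae (Filter.Eventually.of_forall fun ω => mul_comm _ _)
  -- expansion of the squared norm
  have hLHSpt : ∀ ω, euclNorm (∑ k, Z k ω) ^ 2 = ∑ i, ∑ k, ∑ l, Z k ω i * Z l ω i := by
    intro ω
    have h0 : euclNorm (∑ k, Z k ω) ^ 2 = ∑ i, ((∑ k, Z k ω) i) ^ 2 := by
      rw [euclNorm]; exact Real.sq_sqrt (Finset.sum_nonneg fun i _ => sq_nonneg _)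
    rw [h0]
    refine Finset.sum_congr rfl fun i _ => ?_
    rw [Finset.sum_apply, sq, Finset.sum_mul_sum]
  have hstep1 : ∫ ω, euclNorm (∑ k, Z k ω) ^ 2 ∂P
      = ∑ i, ∑ k, ∑ l, ∫ ω, Z k ω i * Z l ω i ∂P := by
    calc ∫ ω, euclNorm (∑ k, Z k ω) ^ 2 ∂P
        = ∫ ω, ∑ i, ∑ k, ∑ l, Z k ω i * Z l ω i ∂P :=
          integral_congr_ae (Filter.Eventually.of_forall hLHSpt)
      _ = ∑ i, ∑ k, ∑ l, ∫ ω, Z k ω i * Z l ω i ∂P := by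
          rw [integral_finset_sum _ fun i _ => integrable_finset_sum _ fun k _ =>
            integrable_finset_sum _ fun l _ => hZZint k l i]
          refine Finset.sum_congr rfl fun i _ => ?_
          rw [integral_finset_sum _ fun k _ => integrable_finset_sum _ fun l _ => hZZint k l i]
          exact Finset.sum_congr rfl fun k _ => integral_finset_sum _ fun l _ => hZZint k l i
  have hstep2 : ∑ i, ∑ k, ∑ l, ∫ ω, Z k ω i * Z l ω i ∂P
      = ∑ k, ∫ ω, ∑ i, Z k ω i ^ 2 ∂P := by
    have hdiagsum : ∀ (i : Fin m) (k : Fin N),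
        ∑ l, ∫ ω, Z k ω i * Z l ω i ∂P = ∫ ω, Z k ω i ^ 2 ∂P := by
      intro i k
      rw [Finset.sum_eq_single k]
      · exact integral_congr_ae (Filter.Eventually.of_forall fun ω => (sq (Z k ω i)).symm)
      · intro l _ hlk
        exact hcross i k l (Ne.symm hlk)
      · intro h; exact absurd (Finset.mem_univ k) h
    simp_rw [hdiagsum]
    rw [Finset.sum_comm]
    exact Finset.sum_congr rfl fun k _ =>
      (integral_finset_sum _ fun i _ => (hZ2 k i).integrable_sq).symm
  -- diagonal bound
  have hdiag : ∀ k, ∫ ω, ∑ i, Z k ω i ^ 2 ∂P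
      ≤ specNorm (F k) ^ 2 * (∫ ω, specNorm (X k ω) ^ 2 ∂P)
          * ∫ ω, euclNorm (y k ω) ^ 2 ∂P := by
    intro k
    have hle : ∫ ω, ∑ i, Z k ω i ^ 2 ∂P
        ≤ ∫ ω, specNorm (F k) ^ 2 * (specNorm (X k ω) ^ 2 * euclNorm (y k ω) ^ 2) ∂P := by
      apply integral_mono (integrable_finset_sum _ fun i _ => (hZ2 k i).integrable_sq)
        (hDomInt k)
      intro ω
      have h1 : ∑ i, Z k ω i ^ 2 = euclNorm (Z k ω) ^ 2 := by
        rw [euclNorm]; exact (Real.sq_sqrt (Finset.sum_nonneg fun i _ => sq_nonneg _)).symm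
      show ∑ i, Z k ω i ^ 2 ≤ _
      rw [h1]
      calc euclNorm (Z k ω) ^ 2
          ≤ (specNorm (F k) * specNorm (X k ω) * euclNorm (y k ω)) ^ 2 :=
            pow_le_pow_left₀ (euclNorm_nonneg _) (hZbound k ω) 2
        _ = specNorm (F k) ^ 2 * (specNorm (X k ω) ^ 2 * euclNorm (y k ω) ^ 2) := by ring
    refine hle.trans (le_of_eq ?_)
    rw [integral_const_mul]
    rw [(hindNorm k).integral_fun_mul_eq_mul_integral (hX2 k).aestronglyMeasurable (hy2 k).aestronglyMeasurable]
    ring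
  calc ∫ ω, euclNorm (∑ k, (F k * X k ω).mulVec (y k ω)) ^ 2 ∂P
      = ∑ k, ∫ ω, ∑ i, Z k ω i ^ 2 ∂P := hstep1.trans hstep2
    _ ≤ ∑ k, specNorm (F k) ^ 2 * (∫ ω, specNorm (X k ω) ^ 2 ∂P)
          * ∫ ω, euclNorm (y k ω) ^ 2 ∂P := Finset.sum_le_sum fun k _ => hdiag k
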